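/- arXiv:2605.16730 — 3 statements merged into one kernel-verified Lean document; each statement's English description precedes it below -/
import Mathlib

section
/- Let W, X ∈ ℝ³ with û = X − W a unit vector, let ŝ be a unit vector with ŝ · û = 0, and let A = W + α·ŝ for some α ∈ ℝ. Let C ∈ ℝ³ with C ≠ A, and suppose C does not lie on the closed ray from A in direction ŝ (equivalently, ‖C − A‖ ≠ (C − A) · ŝ). Define β = α + ((C − A) · û) / (‖C − A‖ − (C − A) · ŝ) and B = X + β·ŝ, and C' = A + ‖C − A‖·ŝ. Then ‖B − C‖ = ‖B − C'‖, and β is the unique real number with this property. -/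
open scoped InnerProductSpace

theorem stmt_0
    (W X A C : EuclideanSpace ℝ (Fin 3)) (u s : EuclideanSpace ℝ (Fin 3))
    (hu : u = X - W) (hu1 : ‖u‖ = 1) (hs1 : ‖s‖ = 1)
    (hsu : ⟪s, u⟫_ℝ = 0)
    (α : ℝ) (hA : A = W + α • s)
    (hCA : C ≠ A)
    (hray : ‖C - A‖ ≠ ⟪C - A, s⟫_ℝ)
    (β : ℝ)
    (hβ : β = α + ⟪C - A, u⟫_ℝ / (‖C - A‖ - ⟪C - A, s⟫_ℝ))
    (B C' : EuclideanSpace ℝ (Fin 3))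
    (hB : B = X + β • s)
    (hC' : C' = A + ‖C - A‖ • s) :
    ‖B - C‖ = ‖B - C'‖ ∧
      ∀ β' : ℝ, ‖(X + β' • s) - C‖ = ‖(X + β' • s) - C'‖ → β' = β := by
  have hrq : ‖C - A‖ - ⟪C - A, s⟫_ℝ ≠ 0 := sub_ne_zero.mpr hray
  have hu2 : ⟪u, u⟫_ℝ = 1 := by
    rw [real_inner_self_eq_norm_sq, hu1]; norm_num
  have hs2 : ⟪s, s⟫_ℝ = 1 := by
    rw [real_inner_self_eq_norm_sq, hs1]; norm_num
  have hus : ⟪u, s⟫_ℝ = 0 := by rw [real_inner_comm]; exact hsu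
  have hd2 : ⟪C - A, C - A⟫_ℝ = ‖C - A‖ ^ 2 := real_inner_self_eq_norm_sq _
  set r : ℝ := ‖C - A‖ with hr
  set p : ℝ := ⟪C - A, u⟫_ℝ with hp
  set q : ℝ := ⟪C - A, s⟫_ℝ with hq
  set d : EuclideanSpace ℝ (Fin 3) := C - A with hd
  have key : ∀ t : ℝ, ‖(X + t • s) - C‖ ^ 2 - ‖(X + t • s) - C'‖ ^ 2
      = 2 * ((t - α) * (r - q) - p) := by
    intro t
    have h1 : (X + t • s) - C = u + (t - α) • s - d := by
      rw [hd, hu, hA]; module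
    have h2 : (X + t • s) - C' = u + (t - α - r) • s := by
      rw [hC', hu, hA]; module
    rw [h1, h2, ← real_inner_self_eq_norm_sq, ← real_inner_self_eq_norm_sq]
    simp only [inner_sub_left, inner_sub_right, inner_add_left, inner_add_right,
      real_inner_smul_left, real_inner_smul_right, hu2, hs2, hd2, hsu, hus,
      real_inner_comm d u, real_inner_comm d s, real_inner_comm u s, ← hp, ← hq, ← hr]
    ring
  have main : ∀ t : ℝ, ‖(X + t • s) - C‖ = ‖(X + t • s) - C'‖ ↔
      (t - α) * (r - q) = p := by
    intro t
    constructor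
    · intro h
      have hk := key t
      rw [h] at hk
      linarith
    · intro h
      have hk := key t
      rw [h] at hk
      have hsq : ‖(X + t • s) - C‖ ^ 2 = ‖(X + t • s) - C'‖ ^ 2 := by linarith
      have h1 := norm_nonneg ((X + t • s) - C)
      have h2 := norm_nonneg ((X + t • s) - C')
      nlinarith [sq_nonneg (‖(X + t • s) - C‖ - ‖(X + t • s) - C'‖),
        sq_nonneg (‖(X + t • s) - C‖ + ‖(X + t • s) - C'‖)]
  have hβeq : (β - α) * (r - q) = p := by
    rw [hβ]; field_simp; ring
  constructor
  · rw [hB]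
    exact (main β).mpr hβeq
  · intro β' h
    have h' := (main β').mp h
    have h0 : (β' - β) * (r - q) = 0 := by linear_combination h' - hβeq
    rcases mul_eq_zero.mp h0 with h0 | h0
    · linarith [sub_eq_zero.mp h0]
    · exact absurd h0 hrq
end

section
/- Let v₁, w₁, v₂, w₂ ∈ ℝ³ with each pair {vᵢ, wᵢ} linearly independent, and suppose the 3×4 matrix M = [v₁ | w₁ | −v₂ | −w₂] has rank 2 (so both pairs span the same plane). Then the cones Cone(v₁,w₁) and Cone(v₂,w₂) intersect in a point other than the origin if and only if one of v₁, w₁ is a nonnegative linear combination of v₂, w₂, or one of v₂, w₂ is a nonnegative linear combination of v₁, w₁. -/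
/-!
In the basis `(v₂, w₂)` of the common plane write `v₁ = a v₂ + b w₂`, `w₁ = c v₂ + d w₂`; then
`Δ = a d - b c ≠ 0` and `Cone(v₂, w₂)` is the closed positive quadrant. If neither `v₁` nor `w₁`
lies in that quadrant while a nonzero nonnegative combination of them does, the two generators
lie on opposite sides of the quadrant, and this forces the sign of `Δ` so that Cramer's rule
`Δ v₂ = d v₁ - b w₁` writes `v₂` as a nonnegative combination of `v₁` and `w₁`.
-/

open Module Submodule

theorem span_pair_eq_of_finrank_le_two {K V : Type*} [DivisionRing K] [AddCommGroup V]
    [Module K V] {u v : V} {W : Submodule K V} [FiniteDimensional K W]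
    (h : LinearIndependent K ![u, v]) (hu : u ∈ W) (hv : v ∈ W) (hW : finrank K W ≤ 2) :
    span K {u, v} = W := by
  refine eq_of_le_of_finrank_le (span_le.2 (Set.pair_subset hu hv)) ?_
  rw [← Matrix.range_cons_cons_empty, finrank_span_eq_card h]
  simpa using hW

lemma det_ne_zero_of_linearIndependent {R V : Type*} [CommRing R] [Nontrivial R] [AddCommGroup V]
    [Module R V] {v₁ w₁ v₂ w₂ : V} {a b c d : R} (h : LinearIndependent R ![v₁, w₁])
    (hv : v₁ = a • v₂ + b • w₂) (hw : w₁ = c • v₂ + d • w₂) : a * d - b * c ≠ 0 := by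
  intro hΔ
  obtain ⟨hd, hb⟩ := h.eq_zero_of_pair (s := d) (t := -b)
    (by linear_combination (norm := module) d • hv - b • hw + hΔ • v₂)
  obtain ⟨hc, ha⟩ := h.eq_zero_of_pair (s := -c) (t := a)
    (by linear_combination (norm := module) a • hw - c • hv + hΔ • w₂)
  exact h.ne_zero 0 (by simp [hv, ha, neg_eq_zero.1 hb])

section PairCone

variable {𝕜 V : Type*} [Field 𝕜] [LinearOrder 𝕜] [IsStrictOrderedRing 𝕜]
  [AddCommGroup V] [Module 𝕜 V]

variable (𝕜) in
def pairCone (u v : V) : Set V := {y | ∃ A B : 𝕜, 0 ≤ A ∧ 0 ≤ B ∧ y = A • u + B • v}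

lemma left_mem_pairCone (u v : V) : u ∈ pairCone 𝕜 u v := ⟨1, 0, zero_le_one, le_rfl, by simp⟩

lemma right_mem_pairCone (u v : V) : v ∈ pairCone 𝕜 u v := ⟨0, 1, le_rfl, zero_le_one, by simp⟩

lemma div_det_nonneg_of_nonneg_combination {a b c d A B : 𝕜} (hA : 0 ≤ A) (hB : 0 ≤ B)
    (hAB : A ≠ 0 ∨ B ≠ 0) (hx : 0 ≤ A * a + B * c) (hy : 0 ≤ A * b + B * d)
    (hp : ¬(0 ≤ a ∧ 0 ≤ b)) (hq : ¬(0 ≤ c ∧ 0 ≤ d)) :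
    0 ≤ d / (a * d - b * c) ∧ 0 ≤ -b / (a * d - b * c) := by
  have hA' : 0 < A := by
    refine hA.lt_of_ne' fun hA0 => hq ?_
    have hB' : 0 < B := hB.lt_of_ne' (hAB.resolve_left (not_not.2 hA0))
    subst hA0
    exact ⟨nonneg_of_mul_nonneg_right (by simpa using hx) hB',
      nonneg_of_mul_nonneg_right (by simpa using hy) hB'⟩
  have hB' : 0 < B := by
    refine hB.lt_of_ne' fun hB0 => hp ?_
    subst hB0
    exact ⟨nonneg_of_mul_nonneg_right (by simpa using hx) hA',
      nonneg_of_mul_nonneg_right (by simpa using hy) hA'⟩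
  have hAB' : 0 < A * B := mul_pos hA' hB'
  -- A negative coordinate of one generator must be compensated by the other: this fixes all signs.
  rcases lt_or_ge a 0 with ha | ha
  · have hc : 0 < c := by nlinarith
    have hd : d < 0 := lt_of_not_ge fun hd => hq ⟨hc.le, hd⟩
    have hb : 0 < b := by nlinarith
    have hΔ : a * d - b * c ≤ 0 := by
      refine nonpos_of_mul_nonpos_right ?_ hAB'
      nlinarith [mul_le_mul (by linarith : -(A * a) ≤ B * c) (by linarith : -(B * d) ≤ A * b)
        (by nlinarith) (by nlinarith)]
    exact ⟨div_nonneg_of_nonpos hd.le hΔ, div_nonneg_of_nonpos (by linarith) hΔ⟩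
  · have hb : b < 0 := lt_of_not_ge fun hb => hp ⟨ha, hb⟩
    have hd : 0 < d := by nlinarith
    have hc : c < 0 := lt_of_not_ge fun hc => hq ⟨hc, hd.le⟩
    have hΔ : 0 ≤ a * d - b * c := by
      refine nonneg_of_mul_nonneg_right ?_ hAB'
      nlinarith [mul_le_mul (by linarith : -(B * c) ≤ A * a) (by linarith : -(A * b) ≤ B * d)
        (by nlinarith) (by nlinarith)]
    exact ⟨div_nonneg hd.le hΔ, div_nonneg (by linarith) hΔ⟩

variable {v₁ w₁ v₂ w₂ : V}

lemma mem_pairCone_of_ne_zero_mem_inter (h₁ : LinearIndependent 𝕜 ![v₁, w₁])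
    (h₂ : LinearIndependent 𝕜 ![v₂, w₂]) (hv₁ : v₁ ∈ span 𝕜 {v₂, w₂})
    (hw₁ : w₁ ∈ span 𝕜 {v₂, w₂}) {x : V} (hx : x ≠ 0) (hx₁ : x ∈ pairCone 𝕜 v₁ w₁)
    (hx₂ : x ∈ pairCone 𝕜 v₂ w₂) (hv₁' : v₁ ∉ pairCone 𝕜 v₂ w₂)
    (hw₁' : w₁ ∉ pairCone 𝕜 v₂ w₂) : v₂ ∈ pairCone 𝕜 v₁ w₁ := by
  obtain ⟨a, b, hv⟩ := mem_span_pair.1 hv₁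
  obtain ⟨c, d, hw⟩ := mem_span_pair.1 hw₁
  obtain ⟨A, B, hA, hB, rfl⟩ := hx₁
  obtain ⟨C, D, hC, hD, hCD⟩ := hx₂
  obtain ⟨rfl, rfl⟩ : A * a + B * c = C ∧ A * b + B * d = D :=
    h₂.eq_of_pair (by linear_combination (norm := module) A • hv + B • hw + hCD)
  have hAB : A ≠ 0 ∨ B ≠ 0 := by
    by_contra! h
    exact hx (by simp [h])
  obtain ⟨hd, hb⟩ := div_det_nonneg_of_nonneg_combination hA hB hAB hC hD
    (fun h => hv₁' ⟨a, b, h.1, h.2, hv.symm⟩) (fun h => hw₁' ⟨c, d, h.1, h.2, hw.symm⟩)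
  have hΔ := det_ne_zero_of_linearIndependent h₁ hv.symm hw.symm
  refine ⟨_, _, hd, hb, ?_⟩
  rw [div_eq_inv_mul, div_eq_inv_mul, mul_smul, mul_smul, ← smul_add, eq_inv_smul_iff₀ hΔ]
  linear_combination (norm := module) d • hv - b • hw

theorem exists_ne_zero_mem_pairCone_inter_iff (h₁ : LinearIndependent 𝕜 ![v₁, w₁])
    (h₂ : LinearIndependent 𝕜 ![v₂, w₂]) (hv₁ : v₁ ∈ span 𝕜 {v₂, w₂})
    (hw₁ : w₁ ∈ span 𝕜 {v₂, w₂}) :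
    (∃ x, x ≠ 0 ∧ x ∈ pairCone 𝕜 v₁ w₁ ∧ x ∈ pairCone 𝕜 v₂ w₂) ↔
      v₁ ∈ pairCone 𝕜 v₂ w₂ ∨ w₁ ∈ pairCone 𝕜 v₂ w₂ ∨
        v₂ ∈ pairCone 𝕜 v₁ w₁ ∨ w₂ ∈ pairCone 𝕜 v₁ w₁ := by
  constructor
  · rintro ⟨x, hx, hx₁, hx₂⟩
    by_contra! h
    exact h.2.2.1 (mem_pairCone_of_ne_zero_mem_inter h₁ h₂ hv₁ hw₁ hx hx₁ hx₂ h.1 h.2.1)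
  · rintro (h | h | h | h)
    · exact ⟨v₁, h₁.ne_zero 0, left_mem_pairCone _ _, h⟩
    · exact ⟨w₁, h₁.ne_zero 1, right_mem_pairCone _ _, h⟩
    · exact ⟨v₂, h₂.ne_zero 0, h, left_mem_pairCone _ _⟩
    · exact ⟨w₂, h₂.ne_zero 1, h, right_mem_pairCone _ _⟩

end PairCone

theorem stmt_10
    (v₁ w₁ v₂ w₂ : Fin 3 → ℝ)
    (h1 : LinearIndependent ℝ ![v₁, w₁])
    (h2 : LinearIndependent ℝ ![v₂, w₂])
    (M : Matrix (Fin 3) (Fin 4) ℝ)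
    (hM : M = Matrix.of fun i j => ![v₁ i, w₁ i, -v₂ i, -w₂ i] j)
    (hrank : M.rank = 2) :
    (∃ x : Fin 3 → ℝ, x ≠ 0 ∧
        x ∈ {y : Fin 3 → ℝ | ∃ A B : ℝ, 0 ≤ A ∧ 0 ≤ B ∧ y = A • v₁ + B • w₁} ∧
        x ∈ {y : Fin 3 → ℝ | ∃ A B : ℝ, 0 ≤ A ∧ 0 ≤ B ∧ y = A • v₂ + B • w₂}) ↔
      ((∃ A B : ℝ, 0 ≤ A ∧ 0 ≤ B ∧ v₁ = A • v₂ + B • w₂) ∨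
       (∃ A B : ℝ, 0 ≤ A ∧ 0 ≤ B ∧ w₁ = A • v₂ + B • w₂) ∨
       (∃ A B : ℝ, 0 ≤ A ∧ 0 ≤ B ∧ v₂ = A • v₁ + B • w₁) ∨
       (∃ A B : ℝ, 0 ≤ A ∧ 0 ≤ B ∧ w₂ = A • v₁ + B • w₁)) := by
  have hcols : M.col = ![v₁, w₁, -v₂, -w₂] := by
    subst hM
    ext j i
    fin_cases j <;> rfl
  have hcol_mem (j : Fin 4) : M.col j ∈ span ℝ (Set.range M.col) := subset_span ⟨j, rfl⟩
  have hplane : span ℝ {v₂, w₂} = span ℝ (Set.range M.col) :=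
    span_pair_eq_of_finrank_le_two h2 (by simpa [hcols] using neg_mem (hcol_mem 2))
      (by simpa [hcols] using neg_mem (hcol_mem 3)) (by rw [← M.rank_eq_finrank_span_cols, hrank])
  exact exists_ne_zero_mem_pairCone_inter_iff h1 h2
    (hplane ▸ by simpa [hcols] using hcol_mem 0) (hplane ▸ by simpa [hcols] using hcol_mem 1)
end

section
/- Let v₁, w₁ ∈ ℝ³ be linearly independent and suppose f is a convex set with p ∈ f such that f ⊆ p + Cone(v₁, w₁) and such that for all A, B ≥ 0 there exists ε > 0 with p + ε(Av₁ + Bw₁) ∈ f. Let g be another such set at p with vectors v₂, w₂ (linearly independent). Then f ∩ g = {p} if and only if Cone(v₁, w₁) ∩ Cone(v₂, w₂) = {0}. -/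
/-- The cone generated by two vectors. -/
def cone2 (u v : EuclideanSpace ℝ (Fin 3)) : Set (EuclideanSpace ℝ (Fin 3)) :=
  {x | ∃ A B : ℝ, 0 ≤ A ∧ 0 ≤ B ∧ x = A • u + B • v}

theorem stmt_17
    (v₁ w₁ v₂ w₂ : EuclideanSpace ℝ (Fin 3))
    (h1 : LinearIndependent ℝ ![v₁, w₁])
    (h2 : LinearIndependent ℝ ![v₂, w₂])
    (p : EuclideanSpace ℝ (Fin 3))
    (f g : Set (EuclideanSpace ℝ (Fin 3)))
    (hfconv : Convex ℝ f) (hgconv : Convex ℝ g)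
    (hpf : p ∈ f) (hpg : p ∈ g)
    (hfsub : f ⊆ {x | ∃ c ∈ cone2 v₁ w₁, x = p + c})
    (hgsub : g ⊆ {x | ∃ c ∈ cone2 v₂ w₂, x = p + c})
    (hfabs : ∀ A B : ℝ, 0 ≤ A → 0 ≤ B → ∃ ε : ℝ, 0 < ε ∧
      p + ε • (A • v₁ + B • w₁) ∈ f)
    (hgabs : ∀ A B : ℝ, 0 ≤ A → 0 ≤ B → ∃ ε : ℝ, 0 < ε ∧
      p + ε • (A • v₂ + B • w₂) ∈ g) :
    f ∩ g = {p} ↔ cone2 v₁ w₁ ∩ cone2 v₂ w₂ = {0} := by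
  constructor
  · intro hfg
    apply Set.eq_singleton_iff_unique_mem.2
    constructor
    · exact ⟨⟨0, 0, le_refl _, le_refl _, by simp⟩, ⟨0, 0, le_refl _, le_refl _, by simp⟩⟩
    · rintro c ⟨⟨A, B, hA, hB, hc1⟩, ⟨A', B', hA', hB', hc2⟩⟩
      obtain ⟨ε₁, hε₁, hmem1⟩ := hfabs A B hA hB
      obtain ⟨ε₂, hε₂, hmem2⟩ := hgabs A' B' hA' hB'
      set ε := min ε₁ ε₂ with hε
      have hεpos : 0 < ε := lt_min hε₁ hε₂
      have key : ∀ (q : EuclideanSpace ℝ (Fin 3)) (s : Set (EuclideanSpace ℝ (Fin 3)))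
          (δ : ℝ), 0 < δ → ε ≤ δ → Convex ℝ s → p ∈ s → p + δ • q ∈ s →
          p + ε • q ∈ s := by
        intro q s δ hδ hle hconv hp hmem
        have ht0 : (0:ℝ) ≤ ε / δ := div_nonneg hεpos.le hδ.le
        have ht1 : ε / δ ≤ 1 := (div_le_one hδ).2 hle
        have := hconv hp hmem (a := 1 - ε/δ) (b := ε/δ) (by linarith) ht0 (by ring)
        convert this using 1
        rw [smul_add, smul_smul, div_mul_cancel₀ _ hδ.ne']
        module
      have hin : p + ε • c ∈ f ∩ g := by
        constructor
        · have := key (A • v₁ + B • w₁) f ε₁ hε₁ (min_le_left _ _) hfconv hpf hmem1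
          rwa [← hc1] at this
        · have := key (A' • v₂ + B' • w₂) g ε₂ hε₂ (min_le_right _ _) hgconv hpg hmem2
          rwa [← hc2] at this
      rw [hfg, Set.mem_singleton_iff] at hin
      have : ε • c = 0 := by
        have := sub_eq_zero.2 hin
        simpa using this
      have hc0 : c = 0 := by
        rcases smul_eq_zero.1 this with h | h
        · exact absurd h hεpos.ne'
        · exact h
      exact hc0
  · intro hcone
    apply Set.eq_singleton_iff_unique_mem.2
    refine ⟨⟨hpf, hpg⟩, ?_⟩
    rintro x ⟨hxf, hxg⟩
    obtain ⟨c₁, hc₁, hx1⟩ := hfsub hxf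
    obtain ⟨c₂, hc₂, hx2⟩ := hgsub hxg
    have hcc : c₁ = c₂ := by
      have : p + c₁ = p + c₂ := by rw [← hx1, ← hx2]
      exact add_left_cancel this
    have : c₁ ∈ cone2 v₁ w₁ ∩ cone2 v₂ w₂ := ⟨hc₁, hcc ▸ hc₂⟩
    rw [hcone, Set.mem_singleton_iff] at this
    rw [hx1, this, add_zero]
end
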